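/- arXiv:2507.16469 — 2 statements merged into one kernel-verified Lean document; each statement's English description precedes it below -/
import Mathlib

section
/- For every m ≥ 1 and n ≥ 3, there exists a 3-uniform word representing the m×n grid graph Gr_{m,n}; that is, Gr_{m,n} is 3-representable. -/
open SimpleGraph

/-- Two distinct letters `x` and `y` alternate in the word `w` if, in the subsequence of `w`
consisting of all occurrences of `x` and `y`, no two consecutive letters are equal. -/
def Alternate {V : Type*} [DecidableEq V] (w : List V) (x y : V) : Prop :=
  (w.filter fun z => decide (z = x ∨ z = y)).Chain' (· ≠ ·)

/-- A word `w` represents the simple graph `G` if every vertex occurs in `w` and two distinct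
vertices alternate in `w` iff they are adjacent in `G`. -/
def Represents {V : Type*} [DecidableEq V] (w : List V) (G : SimpleGraph V) : Prop :=
  (∀ v : V, v ∈ w) ∧ ∀ x y : V, x ≠ y → (Alternate w x y ↔ G.Adj x y)

/-- A word is `k`-uniform if every letter of the alphabet occurs exactly `k` times in it. -/
def Uniform {V : Type*} [DecidableEq V] (k : ℕ) (w : List V) : Prop :=
  ∀ v : V, w.count v = k

/-!
If a word is a concatenation of permutations of the vertices, two letters alternate in it exactly
when every permutation lists them in the same relative order. So the concatenation of the vertex
lists sorted by keys `f₁, …, f_k` represents `G` as soon as every key orders the two ends of each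
edge the same way while, for each non-edge, some key orders its ends one way and some key the
other way. For the grid three such keys, built from the coordinates and the parity of a vertex,
suffice.
-/

theorem alternate_comm {V : Type*} [DecidableEq V] (w : List V) (x y : V) :
    Alternate w x y ↔ Alternate w y x := by
  simp only [Alternate, or_comm]

section PermutationalWord

variable {V α : Type*}

theorem List.isChain_ne_flatten_iff {x y : V} (hxy : x ≠ y) {L : List (List V)}
    (hL : ∀ B ∈ L, B = [x, y] ∨ B = [y, x]) :
    L.flatten.IsChain (· ≠ ·) ↔ L.IsChain (· = ·) := by
  rw [List.isChain_flatten fun h => by simpa using hL [] h]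
  have hblocks : ∀ B ∈ L, B.IsChain (· ≠ ·) := by
    intro B hB
    rcases hL B hB with rfl | rfl <;> simp [hxy, hxy.symm]
  rw [and_iff_right hblocks]
  refine List.IsChain.iff_of_mem_imp fun B C hB hC => ?_
  rcases hL B hB with rfl | rfl <;> rcases hL C hC with rfl | rfl <;> simp [hxy, hxy.symm]

theorem List.Nodup.filter_eq_pair_or_eq_pair [DecidableEq V] {p : List V} (hp : p.Nodup)
    {x y : V} (hx : x ∈ p) (hy : y ∈ p) (hxy : x ≠ y) :
    p.filter (fun z => decide (z = x ∨ z = y)) = [x, y] ∨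
      p.filter (fun z => decide (z = x ∨ z = y)) = [y, x] :=
  List.perm_pair.1 <| (List.perm_ext_iff_of_nodup (hp.filter _) (by simp [hxy])).2 fun z => by
    simp only [List.mem_filter, decide_eq_true_eq, List.mem_cons, List.not_mem_nil, or_false]
    grind

theorem List.filter_eq_pair_of_pairwise_of_lt [DecidableEq V] [Preorder α] {f : V → α}
    {p : List V} (hs : p.Pairwise (f · ≤ f ·)) (hp : p.Nodup) {x y : V} (hx : x ∈ p)
    (hy : y ∈ p) (hlt : f x < f y) : p.filter (fun z => decide (z = x ∨ z = y)) = [x, y] := by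
  refine (hp.filter_eq_pair_or_eq_pair hx hy (ne_of_apply_ne f hlt.ne)).resolve_right fun h => ?_
  have hyx := hs.filter (fun z => decide (z = x ∨ z = y))
  rw [h, List.pairwise_pair] at hyx
  exact hyx.not_gt hlt

variable [Fintype V] [LinearOrder α]

noncomputable def sortedBy (f : V → α) : List V :=
  Finset.univ.toList.mergeSort fun a b => f a ≤ f b

theorem nodup_sortedBy (f : V → α) : (sortedBy f).Nodup :=
  (List.mergeSort_perm _ _).nodup_iff.2 (Finset.nodup_toList _)

theorem mem_sortedBy (f : V → α) (v : V) : v ∈ sortedBy f :=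
  (List.mergeSort_perm _ _).mem_iff.2 (Finset.mem_toList.2 (Finset.mem_univ v))

theorem pairwise_sortedBy (f : V → α) : (sortedBy f).Pairwise (f · ≤ f ·) := by
  simpa [sortedBy] using List.pairwise_mergeSort (le := fun a b => decide (f a ≤ f b))
    (by simpa using fun _ _ _ => le_trans) (by simpa using fun a b => le_total (f a) (f b)) _

variable [DecidableEq V]

theorem filter_sortedBy_eq_pair_of_lt {f : V → α} {x y : V} (hlt : f x < f y) :
    (sortedBy f).filter (fun z => decide (z = x ∨ z = y)) = [x, y] :=
  List.filter_eq_pair_of_pairwise_of_lt (pairwise_sortedBy f) (nodup_sortedBy f)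
    (mem_sortedBy f x) (mem_sortedBy f y) hlt

noncomputable def permutationalWord (fs : List (V → α)) : List V :=
  fs.flatMap sortedBy

theorem count_permutationalWord (fs : List (V → α)) (v : V) :
    (permutationalWord fs).count v = fs.length := by
  simp [permutationalWord, List.count_flatMap, Function.comp_def,
    List.count_eq_one_of_mem (nodup_sortedBy _) (mem_sortedBy _ v)]

theorem alternate_permutationalWord_iff {fs : List (V → α)} {x y : V} (hxy : x ≠ y) :
    Alternate (permutationalWord fs) x y ↔
      (fs.map fun f => (sortedBy f).filter fun z => decide (z = x ∨ z = y)).IsChain (· = ·) := by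
  rw [Alternate, List.Chain', permutationalWord, List.filter_flatMap, List.flatMap_def,
    List.isChain_ne_flatten_iff hxy]
  simp only [List.mem_map]
  rintro _ ⟨f, -, rfl⟩
  exact (nodup_sortedBy f).filter_eq_pair_or_eq_pair (mem_sortedBy f x) (mem_sortedBy f y) hxy

theorem alternate_permutationalWord_of_forall_lt {fs : List (V → α)} {x y : V} (hxy : x ≠ y)
    (h : ∀ f ∈ fs, f x < f y) : Alternate (permutationalWord fs) x y := by
  rw [alternate_permutationalWord_iff hxy,
    List.map_congr_left fun f hf => filter_sortedBy_eq_pair_of_lt (h f hf), List.map_const']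
  exact List.isChain_replicate_of_rel _ rfl

theorem not_alternate_permutationalWord {fs : List (V → α)} {f g : V → α} {x y : V}
    (hf : f ∈ fs) (hg : g ∈ fs) (hfxy : f x < f y) (hgyx : g y < g x) :
    ¬ Alternate (permutationalWord fs) x y := by
  have hxy : x ≠ y := ne_of_apply_ne f hfxy.ne
  rw [alternate_permutationalWord_iff hxy, List.isChain_iff_pairwise]
  intro h
  have hfg := h.forall (List.mem_map_of_mem hf) (List.mem_map_of_mem hg)
  have hgyx' : (sortedBy g).filter (fun z => decide (z = x ∨ z = y)) = [y, x] := by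
    simpa only [or_comm] using filter_sortedBy_eq_pair_of_lt hgyx
  rw [filter_sortedBy_eq_pair_of_lt hfxy, hgyx'] at hfg
  simp [hxy] at hfg

theorem represents_permutationalWord {G : SimpleGraph V} {fs : List (V → α)} (hfs : fs ≠ [])
    (hadj : ∀ x y, G.Adj x y → (∀ f ∈ fs, f x < f y) ∨ ∀ f ∈ fs, f y < f x)
    (hnadj : ∀ x y, x ≠ y → ¬ G.Adj x y → (∃ f ∈ fs, f x < f y) ∧ ∃ f ∈ fs, f y < f x) :
    Represents (permutationalWord fs) G := by
  refine ⟨fun v => ?_, fun x y hxy => ⟨fun halt => ?_, fun hxy' => ?_⟩⟩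
  · obtain ⟨f, hf⟩ := List.exists_mem_of_ne_nil fs hfs
    exact List.mem_flatMap.2 ⟨f, hf, mem_sortedBy f v⟩
  · by_contra hna
    obtain ⟨⟨f, hf, hfxy⟩, g, hg, hgyx⟩ := hnadj x y hxy hna
    exact not_alternate_permutationalWord hf hg hfxy hgyx halt
  · rcases hadj x y hxy' with h | h
    · exact alternate_permutationalWord_of_forall_lt hxy h
    · exact (alternate_comm _ _ _).2 (alternate_permutationalWord_of_forall_lt hxy.symm h)

end PermutationalWord

/-- The parity term outweighs a unit step of the linear part, so every key puts the even end of
an edge before its odd end, while the linear parts `4i + 6j`, `4i - 6j` and `-2i` order every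
non-adjacent pair both ways. -/
def gridKeys (m n : ℕ) : List (Fin m × Fin n → ℤ) :=
  [fun v => 4 * v.1 + 6 * v.2 + 7 * ((v.1 + v.2 : ℤ) % 2),
   fun v => 4 * v.1 - 6 * v.2 + 7 * ((v.1 + v.2 : ℤ) % 2),
   fun v => -2 * v.1 + 3 * ((v.1 + v.2 : ℤ) % 2)]

theorem gridKeys_lt_of_adj {m n : ℕ} {x y : Fin m × Fin n}
    (h : (pathGraph m □ pathGraph n).Adj x y) :
    (∀ f ∈ gridKeys m n, f x < f y) ∨ ∀ f ∈ gridKeys m n, f y < f x := by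
  simp only [boxProd_adj, pathGraph_adj, Fin.ext_iff] at h
  simp only [gridKeys, List.forall_mem_cons, List.not_mem_nil, IsEmpty.forall_iff,
    forall_const, and_true]
  omega

theorem gridKeys_separate_of_not_adj {m n : ℕ} {x y : Fin m × Fin n} (hxy : x ≠ y)
    (h : ¬ (pathGraph m □ pathGraph n).Adj x y) :
    (∃ f ∈ gridKeys m n, f x < f y) ∧ ∃ f ∈ gridKeys m n, f y < f x := by
  rw [Ne, Prod.ext_iff, Fin.ext_iff, Fin.ext_iff] at hxy
  simp only [boxProd_adj, pathGraph_adj, Fin.ext_iff] at h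
  simp only [gridKeys, List.mem_cons, List.not_mem_nil, or_false, exists_eq_or_imp,
    exists_eq_left]
  omega

theorem gridGraph_three_representable_general (m n : ℕ) :
    ∃ w : List (Fin m × Fin n), Uniform 3 w ∧ Represents w (pathGraph m □ pathGraph n) :=
  ⟨permutationalWord (gridKeys m n), count_permutationalWord _,
    represents_permutationalWord (List.cons_ne_nil _ _) (fun _ _ => gridKeys_lt_of_adj)
      (fun _ _ => gridKeys_separate_of_not_adj)⟩

/-- For every `m ≥ 1` and `n ≥ 3`, the grid graph `Gr_{m,n} = P_m □ P_n` is `3`-representable. -/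
theorem gridGraph_three_representable (m n : ℕ) (hm : 1 ≤ m) (hn : 3 ≤ n) :
    ∃ w : List (Fin m × Fin n), Uniform 3 w ∧ Represents w (pathGraph m □ pathGraph n) :=
  gridGraph_three_representable_general m n
end

section
/- For every n ≥ 3, the word W = x_1 x_2 x_1 · (x_3 x_2 x_1) · (x_4 x_3 x_2) · (x_5 x_4 x_3) ⋯ (x_n x_{n−1} x_{n−2}) · x_n x_{n−1} x_n, i.e., the prefix x_1 x_2 x_1 followed by the blocks x_j x_{j−1} x_{j−2} for j = 3, 4, …, n in increasing order of j, followed by the suffix x_n x_{n−1} x_n, is a 3-uniform word that represents the path graph P_n with vertices x_1, …, x_n and edges x_j x_{j+1} for j = 1, …, n−1. -/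
open SimpleGraph

/-!
Replace `x k` by `k`, i.e. work with the word `pathWord n` over `ℕ`, and transport along `x`,
which is injective on the letters `1, …, n` that occur. Deleting the letter `n + 1` from
`pathWord (n + 1)` gives `pathWord n`: the last block and the suffix
`(n+1) n (n-1) · (n+1) n (n+1)` shrink to `n (n-1) n`. Hence the restriction of `pathWord n` to
two letters `i < j` is already that of `pathWord j`. For `j = i + 1` it is
`i (i+1) i (i+1) i (i+1)`, so adjacent letters alternate and every letter occurs three times. For
`j ≥ i + 2` the first two occurrences of `i` come before every occurrence of `j` (both lie in
the part preceding the block `x_{i+2} x_{i+1} x_i`), so `i` and `j` do not alternate.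
-/

section Transport

variable {α β : Type*} [DecidableEq α] [DecidableEq β] {f : α → β} {w : List α}

theorem alternate_iff_isChain (w : List α) (a b : α) :
    Alternate w a b ↔ (w.filter fun z => decide (z = a ∨ z = b)).IsChain (· ≠ ·) :=
  Iff.rfl

theorem alternate_comm_s10 (w : List α) (a b : α) : Alternate w a b ↔ Alternate w b a := by
  rw [alternate_iff_isChain, alternate_iff_isChain,
    List.filter_congr fun z _ => decide_eq_decide.mpr or_comm]

theorem count_map_of_injOn (hf : Set.InjOn f {a | a ∈ w}) {a : α} (ha : a ∈ w) :
    (w.map f).count (f a) = w.count a := by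
  rw [List.count_eq_countP, List.count_eq_countP, List.countP_map]
  refine List.countP_congr fun z hz => ?_
  simpa using hf.eq_iff hz ha

theorem alternate_map_iff (hf : Set.InjOn f {a | a ∈ w}) {a b : α} (ha : a ∈ w) (hb : b ∈ w) :
    Alternate (w.map f) (f a) (f b) ↔ Alternate w a b := by
  have hfilter : (w.map f).filter (fun z => decide (z = f a ∨ z = f b)) =
      (w.filter fun z => decide (z = a ∨ z = b)).map f := by
    rw [List.filter_map]
    congr 1
    refine List.filter_congr fun z hz => ?_
    simp [hf.eq_iff hz ha, hf.eq_iff hz hb]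
  rw [alternate_iff_isChain, alternate_iff_isChain, hfilter]
  refine (List.isChain_map f).trans (List.IsChain.iff_of_mem_imp fun c d hc hd => ?_)
  exact hf.ne_iff (List.mem_of_mem_filter hc) (List.mem_of_mem_filter hd)

end Transport

def pathWordBody (m : ℕ) : List ℕ :=
  [1, 2, 1] ++ (List.range m).flatMap fun t => [t + 3, t + 2, t + 1]

def pathWord (n : ℕ) : List ℕ :=
  pathWordBody (n - 2) ++ [n, n - 1, n]

theorem pathWordBody_succ (m : ℕ) :
    pathWordBody (m + 1) = pathWordBody m ++ [m + 3, m + 2, m + 1] := by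
  simp [pathWordBody, List.range_succ]

theorem pathWord_add_two (m : ℕ) : pathWord (m + 2) = pathWordBody m ++ [m + 2, m + 1, m + 2] := by
  simp [pathWord]

theorem mem_pathWordBody {m z : ℕ} (hz : z ∈ pathWordBody m) : 1 ≤ z ∧ z ≤ m + 2 := by
  induction m with
  | zero => simp [pathWordBody] at hz; omega
  | succ m ih =>
    rw [pathWordBody_succ, List.mem_append] at hz
    rcases hz with hz | hz
    · have := ih hz; omega
    · simp at hz; omega

theorem mem_pathWord {n z : ℕ} (hn : 2 ≤ n) (hz : z ∈ pathWord n) : 1 ≤ z ∧ z ≤ n := by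
  obtain ⟨m, rfl⟩ := Nat.exists_eq_add_of_le' hn
  rw [pathWord_add_two, List.mem_append] at hz
  rcases hz with hz | hz
  · exact mem_pathWordBody hz
  · simp at hz; omega

theorem pathWordBody_prefix {m m' : ℕ} (h : m ≤ m') : pathWordBody m <+: pathWordBody m' := by
  induction m', h using Nat.le_induction with
  | base => exact List.prefix_refl _
  | succ m' _ ih => exact ih.trans (pathWordBody_succ m' ▸ List.prefix_append _ _)

theorem filter_pathWordBody_eq_nil {m : ℕ} {p : ℕ → Bool} (hp : ∀ z ≤ m + 2, p z = false) :
    (pathWordBody m).filter p = [] :=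
  List.filter_eq_nil_iff.mpr fun z hz => by simp [hp z (mem_pathWordBody hz).2]

theorem filter_pathWord_succ {m : ℕ} {p : ℕ → Bool} (hp : p (m + 3) = false) :
    (pathWord (m + 3)).filter p = (pathWord (m + 2)).filter p := by
  rw [pathWord_add_two, pathWord_add_two, pathWordBody_succ]
  cases h1 : p (m + 1) <;> cases h2 : p (m + 2) <;> simp [hp, h1, h2]

theorem filter_pathWord_of_le {n₀ n : ℕ} {p : ℕ → Bool} (hn₀ : 2 ≤ n₀) (hn : n₀ ≤ n)
    (hp : ∀ z, n₀ < z → p z = false) : (pathWord n).filter p = (pathWord n₀).filter p := by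
  induction n, hn using Nat.le_induction with
  | base => rfl
  | succ n hn ih =>
    obtain ⟨m, rfl⟩ := Nat.exists_eq_add_of_le' (hn₀.trans hn)
    rw [filter_pathWord_succ (hp _ (by omega)), ih]

theorem filter_pathWord_adjacent {i n : ℕ} (hi : 1 ≤ i) (hin : i + 1 ≤ n) :
    (pathWord n).filter (fun z => decide (z = i ∨ z = i + 1)) = [i, i + 1, i, i + 1, i, i + 1] := by
  rw [filter_pathWord_of_le (n₀ := i + 1) (by omega) hin fun z hz => by simp; omega]
  match i, hi with
  | 1, _ => rfl
  | 2, _ => rfl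
  | k + 3, _ =>
    rw [pathWord_add_two, pathWordBody_succ, pathWordBody_succ, List.filter_append,
      List.filter_append, List.filter_append, filter_pathWordBody_eq_nil fun z hz => by simp; omega]
    simp

theorem filter_pathWordBody_nonadjacent {i j : ℕ} (hi : 1 ≤ i) (hij : i + 2 ≤ j) :
    (pathWordBody (i - 1)).filter (fun z => decide (z = i ∨ z = j)) = [i, i] := by
  match i, hi, hij with
  | 1, _, hij => simp [pathWordBody, show 2 ≠ j by omega, show 1 ≠ j by omega]
  | 2, _, hij =>
    simp [pathWordBody, show 1 ≠ j by omega, show 2 ≠ j by omega, show 3 ≠ j by omega]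
  | k + 3, _, hij =>
    rw [show k + 3 - 1 = k + 2 from rfl, pathWordBody_succ, pathWordBody_succ, List.filter_append,
      List.filter_append, filter_pathWordBody_eq_nil fun z hz => by simp; omega]
    simp [show k + 1 ≠ j by omega, show k + 2 ≠ j by omega, show k + 4 ≠ j by omega]

theorem alternate_pathWord_succ {i n : ℕ} (hi : 1 ≤ i) (hin : i + 1 ≤ n) :
    Alternate (pathWord n) i (i + 1) := by
  rw [alternate_iff_isChain, filter_pathWord_adjacent hi hin]
  simp [List.isChain_cons_cons]

theorem not_alternate_pathWord {i j n : ℕ} (hi : 1 ≤ i) (hij : i + 2 ≤ j) (hjn : j ≤ n) :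
    ¬ Alternate (pathWord n) i j := by
  have hprefix : (pathWordBody (i - 1)).filter (fun z => decide (z = i ∨ z = j)) <+:
      (pathWord n).filter (fun z => decide (z = i ∨ z = j)) :=
    ((pathWordBody_prefix (by omega : i - 1 ≤ n - 2)).trans (List.prefix_append _ _)).filter _
  rw [filter_pathWordBody_nonadjacent hi hij] at hprefix
  obtain ⟨l, hl⟩ := hprefix
  rw [alternate_iff_isChain, ← hl]
  simp [List.isChain_cons_cons]

theorem alternate_pathWord_iff {i j n : ℕ} (hi : 1 ≤ i) (hj : 1 ≤ j) (hin : i ≤ n) (hjn : j ≤ n)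
    (hij : i ≠ j) : Alternate (pathWord n) i j ↔ i + 1 = j ∨ j + 1 = i := by
  wlog hlt : i < j generalizing i j
  · rw [alternate_comm_s10, this hj hi hjn hin hij.symm (by omega), or_comm]
  constructor
  · intro halt
    by_contra hadj
    exact not_alternate_pathWord hi (by omega) hjn halt
  · rintro (rfl | h)
    · exact alternate_pathWord_succ hi hjn
    · omega

theorem count_pathWord {k n : ℕ} (hn : 2 ≤ n) (hk : 1 ≤ k) (hkn : k ≤ n) :
    (pathWord n).count k = 3 := by
  obtain ⟨i, hi, hin, hki⟩ : ∃ i, 1 ≤ i ∧ i + 1 ≤ n ∧ (k = i ∨ k = i + 1) :=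
    ⟨min k (n - 1), by omega, by omega, by omega⟩
  rw [← List.count_filter (p := fun z => decide (z = i ∨ z = i + 1)) (by simpa using hki),
    filter_pathWord_adjacent hi hin]
  rcases hki with rfl | rfl <;> simp

/-- For every `n ≥ 3`, the word
`W = x₁x₂x₁ · (x₃x₂x₁)(x₄x₃x₂)⋯(xₙxₙ₋₁xₙ₋₂) · xₙxₙ₋₁xₙ`
is a `3`-uniform word representing the path graph `Pₙ` with vertices `x₁, …, xₙ`
(where `x k` is the vertex of `Fin n` with value `k - 1`). -/
theorem word_W_represents_pathGraph (n : ℕ) (hn : 3 ≤ n) (x : ℕ → Fin n)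
    (hx : ∀ k, 1 ≤ k → k ≤ n → (x k : ℕ) = k - 1) :
    Uniform 3
      ([x 1, x 2, x 1] ++
        ((List.range (n - 2)).flatMap fun t => [x (t + 3), x (t + 2), x (t + 1)]) ++
        [x n, x (n - 1), x n]) ∧
    Represents
      ([x 1, x 2, x 1] ++
        ((List.range (n - 2)).flatMap fun t => [x (t + 3), x (t + 2), x (t + 1)]) ++
        [x n, x (n - 1), x n])
      (pathGraph n) := by
  have hword : [x 1, x 2, x 1] ++
      ((List.range (n - 2)).flatMap fun t => [x (t + 3), x (t + 2), x (t + 1)]) ++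
      [x n, x (n - 1), x n] = (pathWord n).map x := by
    simp [pathWord, pathWordBody, List.map_flatMap]
  rw [hword]
  have hinj : Set.InjOn x {k | k ∈ pathWord n} := fun k hk k' hk' h => by
    obtain ⟨hk₁, hkn⟩ := mem_pathWord (by omega) hk
    obtain ⟨hk₁', hkn'⟩ := mem_pathWord (by omega) hk'
    have hval := congrArg Fin.val h
    rw [hx k hk₁ hkn, hx k' hk₁' hkn'] at hval
    omega
  have hvertex : ∀ v : Fin n, x ((v : ℕ) + 1) = v := fun v =>
    Fin.ext <| by rw [hx _ (by omega) (by omega)]; rfl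
  have hcount : ∀ v : Fin n, (pathWord n).count ((v : ℕ) + 1) = 3 := fun v =>
    count_pathWord (by omega) (by omega) (by omega)
  have hmem : ∀ v : Fin n, (v : ℕ) + 1 ∈ pathWord n := fun v =>
    List.count_pos_iff.mp (by rw [hcount v]; omega)
  refine ⟨fun v => ?_, fun v => ?_, fun u v huv => ?_⟩
  · rw [← hvertex v, count_map_of_injOn hinj (hmem v), hcount v]
  · rw [← hvertex v]
    exact List.mem_map_of_mem (hmem v)
  · rw [← hvertex u, ← hvertex v, alternate_map_iff hinj (hmem u) (hmem v),
      alternate_pathWord_iff (by omega) (by omega) (by omega) (by omega) (by omega),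
      hvertex, hvertex, pathGraph_adj]
    omega
end
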